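/- arXiv:2509.02103 — 2 statements merged into one kernel-verified Lean document; each statement's English description precedes it below -/
import Mathlib

section
/- Define ℓ(θ; D) = (1/M) Σ_{j=1}^M log f_θ(v_j, N_j) for a finite data set D = {(v_j, N_j)}_{j=1}^M ⊆ [0,1] × ℕ, where f_θ is the extended Beta-density parametrization (f_θ(v,N)=1 if v=0 or N=0; v^{θ-1}(1-v)^{N-θ}/B(θ,N-θ+1) if v≠0 and N>θ; N v^{N-1} otherwise). Then ℓ(·; D) is upper semi-continuous on (0, ∞), and on every interval I ⊆ (0,∞) \ {N_j : j ∈ [M]} the function ℓ(·; D) is either constant or smooth and strictly concave. -/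
open MeasureTheory Real Set

noncomputable def betaFun (a b : ℝ) : ℝ := ∫ v in (0:ℝ)..1, v ^ (a - 1) * (1 - v) ^ (b - 1)

/-- Extended Beta-density parametrization `f_θ(v, N)`. -/
noncomputable def fExt (θ : ℝ) (v : ℝ) (N : ℕ) : ℝ :=
  if v = 0 ∨ N = 0 then 1
  else if θ < (N : ℝ) then v ^ (θ - 1) * (1 - v) ^ ((N:ℝ) - θ) / betaFun θ ((N:ℝ) - θ + 1)
  else (N : ℝ) * v ^ ((N:ℝ) - 1)

/-- `log` with value `-∞` at `0` (extended-real convention). -/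
noncomputable def elog (x : ℝ) : EReal := if x ≤ 0 then (⊥ : EReal) else (Real.log x : EReal)

/-- The (average) log-likelihood of the data set, with extended-real values. -/
noncomputable def logLik (M : ℕ) (v : Fin M → ℝ) (N : Fin M → ℕ) (θ : ℝ) : EReal :=
  (((M:ℝ)⁻¹ : ℝ) : EReal) * ∑ j : Fin M, elog (fExt θ (v j) (N j))

/-! ### Auxiliary lemmas -/

section Aux

lemma contDiffAt_realGamma {x : ℝ} (hx : 0 < x) : ContDiffAt ℝ (⊤ : ℕ∞) Real.Gamma x := by
  have hball : DifferentiableOn ℂ Complex.Gamma (Metric.ball (x:ℂ) x) := by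
    intro s hs
    refine (Complex.differentiableAt_Gamma s fun m => ?_).differentiableWithinAt
    intro hsm
    have hd : ‖s - (x:ℂ)‖ < x := by
      simpa [Complex.dist_eq] using Metric.mem_ball.1 hs
    have h2 : |(s - (x:ℂ)).re| ≤ ‖s - (x:ℂ)‖ := Complex.abs_re_le_norm _
    have h3 : |s.re - x| < x := by
      have : (s - (x:ℂ)).re = s.re - x := by simp
      rw [this] at h2; exact lt_of_le_of_lt h2 hd
    have hre : 0 < s.re := by have := abs_lt.1 h3; linarith [this.1]
    rw [hsm] at hre
    simp only [Complex.neg_re, Complex.natCast_re] at hre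
    have : (0:ℝ) ≤ (m:ℝ) := Nat.cast_nonneg m
    linarith
  have hA : AnalyticAt ℂ Complex.Gamma (x:ℂ) :=
    hball.analyticAt (Metric.ball_mem_nhds _ (by exact_mod_cast hx))
  have hC : ContDiffAt ℂ (⊤ : ℕ∞) Complex.Gamma (x:ℂ) := hA.contDiffAt
  have h1 : ContDiffAt ℝ (⊤ : ℕ∞) (fun y : ℝ => (Complex.Gamma (y:ℂ)).re) x := by
    exact Complex.reCLM.contDiff.contDiffAt.comp _
      ((hC.restrict_scalars ℝ).comp _ Complex.ofRealCLM.contDiff.contDiffAt)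
  refine h1.congr_of_eventuallyEq (Filter.Eventually.of_forall fun y => ?_)
  show Real.Gamma y = (Complex.Gamma (y:ℂ)).re
  rw [Complex.Gamma_ofReal, Complex.ofReal_re]

lemma betaFun_eq_Gamma {a b : ℝ} (ha : 0 < a) (hb : 0 < b) :
    betaFun a b = Real.Gamma a * Real.Gamma b / Real.Gamma (a + b) := by
  have hc : Complex.Gamma a * Complex.Gamma b
      = Complex.Gamma ((a:ℂ) + b) * Complex.betaIntegral a b :=
    Complex.Gamma_mul_Gamma_eq_betaIntegral (by simpa using ha) (by simpa using hb)
  have hbeta : Complex.betaIntegral (a:ℂ) (b:ℂ) = ((betaFun a b : ℝ) : ℂ) := by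
    rw [Complex.betaIntegral, betaFun]
    rw [← intervalIntegral.integral_ofReal]
    refine intervalIntegral.integral_congr fun x hx => ?_
    rw [uIcc_of_le (by norm_num : (0:ℝ) ≤ 1)] at hx
    push_cast
    rw [Complex.ofReal_cpow hx.1, Complex.ofReal_cpow (by linarith [hx.2] : (0:ℝ) ≤ 1 - x)]
    push_cast
    ring
  rw [hbeta, ← Complex.ofReal_add, Complex.Gamma_ofReal, Complex.Gamma_ofReal,
    Complex.Gamma_ofReal, ← Complex.ofReal_mul, ← Complex.ofReal_mul] at hc
  have := Complex.ofReal_injective hc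
  have hG : Real.Gamma (a + b) ≠ 0 := (Real.Gamma_pos_of_pos (by linarith)).ne'
  field_simp [this]
  linarith [this]

lemma betaFun_pos {a b : ℝ} (ha : 0 < a) (hb : 0 < b) : 0 < betaFun a b := by
  rw [betaFun_eq_Gamma ha hb]
  have h1 := Real.Gamma_pos_of_pos ha
  have h2 := Real.Gamma_pos_of_pos hb
  have h3 := Real.Gamma_pos_of_pos (by linarith : 0 < a + b)
  positivity

lemma StrictConvexOn.congr' {s : Set ℝ} {f g : ℝ → ℝ} (hf : StrictConvexOn ℝ s f)
    (h : ∀ x ∈ s, f x = g x) : StrictConvexOn ℝ s g := by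
  refine ⟨hf.1, fun x hx y hy hne a b ha hb hab => ?_⟩
  rw [← h x hx, ← h y hy, ← h _ (hf.1 hx hy ha.le hb.le hab)]
  exact hf.2 hx hy hne ha hb hab

lemma StrictConcaveOn.congr' {s : Set ℝ} {f g : ℝ → ℝ} (hf : StrictConcaveOn ℝ s f)
    (h : ∀ x ∈ s, f x = g x) : StrictConcaveOn ℝ s g := by
  refine ⟨hf.1, fun x hx y hy hne a b ha hb hab => ?_⟩
  rw [← h x hx, ← h y hy, ← h _ (hf.1 hx hy ha.le hb.le hab)]
  exact hf.2 hx hy hne ha hb hab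

lemma strictConvexOn_logGamma : StrictConvexOn ℝ (Ioi (0:ℝ)) (fun x => Real.log (Real.Gamma x)) := by
  have h1 : ConvexOn ℝ (Ioi (0:ℝ)) (fun x => Real.log (Real.Gamma (x + 1))) := by
    refine ⟨convex_Ioi 0, fun x hx y hy a b ha hb hab => ?_⟩
    have hx1 : x + 1 ∈ Ioi (0:ℝ) := by simp only [mem_Ioi] at *; linarith
    have hy1 : y + 1 ∈ Ioi (0:ℝ) := by simp only [mem_Ioi] at *; linarith
    have := Real.convexOn_log_Gamma.2 hx1 hy1 ha hb hab
    simp only [Function.comp, smul_eq_mul] at this ⊢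
    have harg : a * (x + 1) + b * (y + 1) = a * x + b * y + 1 := by linarith [hab]
    rw [harg] at this
    exact this
  have h2 : StrictConvexOn ℝ (Ioi (0:ℝ)) (fun x : ℝ => -Real.log x) := by
    have := strictConcaveOn_log_Ioi.neg
    refine this.congr' fun x _ => by simp
  have h3 := h1.add_strictConvexOn h2
  refine h3.congr' fun x hx => ?_
  simp only [Pi.add_apply, mem_Ioi] at *
  rw [Real.Gamma_add_one hx.ne', Real.log_mul hx.ne' (Real.Gamma_pos_of_pos hx).ne']
  ring

lemma strictConvexOn_comp_const_sub {s : Set ℝ} (hs : Convex ℝ s) {f : ℝ → ℝ}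
    (hf : StrictConvexOn ℝ (Ioi (0:ℝ)) f) (c : ℝ) (h : ∀ x ∈ s, c - x ∈ Ioi (0:ℝ)) :
    StrictConvexOn ℝ s (fun x => f (c - x)) := by
  refine ⟨hs, fun x hx y hy hne a b ha hb hab => ?_⟩
  have key := hf.2 (h x hx) (h y hy) (fun hh => hne (by linarith)) ha hb hab
  have harg : a • (c - x) + b • (c - y) = c - (a • x + b • y) := by
    simp only [smul_eq_mul]; linear_combination c * hab
  rw [harg] at key
  simpa using key

lemma strictConcaveOn_const_mul {s : Set ℝ} {f : ℝ → ℝ} (hf : StrictConcaveOn ℝ s f)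
    {c : ℝ} (hc : 0 < c) : StrictConcaveOn ℝ s (fun x => c * f x) := by
  refine ⟨hf.1, fun x hx y hy hne a b ha hb hab => ?_⟩
  have key := hf.2 hx hy hne ha hb hab
  simp only [smul_eq_mul] at *
  nlinarith

lemma concaveOn_finset_sum {ι : Type*} (t : Finset ι) {g : ι → ℝ → ℝ} {s : Set ℝ}
    (hs : Convex ℝ s) (h : ∀ i ∈ t, ConcaveOn ℝ s (g i)) :
    ConcaveOn ℝ s (fun x => ∑ i ∈ t, g i x) := by
  classical
  induction t using Finset.induction_on with
  | empty => simpa using concaveOn_const 0 hs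
  | insert _ _ hnotmem ih =>
    rename_i a t'
    simp only [Finset.sum_insert hnotmem]
    exact (h a (Finset.mem_insert_self a t')).add (ih fun i hi => h i (Finset.mem_insert_of_mem hi))

lemma concaveOn_affine {s : Set ℝ} (hs : Convex ℝ s) (α β : ℝ) :
    ConcaveOn ℝ s (fun x => α * x + β) := by
  refine ⟨hs, fun x hx y hy a b ha hb hab => ?_⟩
  simp only [smul_eq_mul]
  have heq : α * (a * x + b * y) + β = a * (α * x + β) + b * (α * y + β) := by
    linear_combination (-β) * hab
  rw [heq]

lemma convex_avoid {I : Set ℝ} (hI : Convex ℝ I) {c : ℝ} (hc : c ∉ I) :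
    I ⊆ Iio c ∨ I ⊆ Ioi c := by
  by_contra h
  push_neg at h
  obtain ⟨x, hx, hxc⟩ := not_subset.1 h.1
  obtain ⟨y, hy, hyc⟩ := not_subset.1 h.2
  simp only [mem_Iio, mem_Ioi, not_lt] at hxc hyc
  exact hc (hI.ordConnected.out hy hx ⟨hyc, hxc⟩)

lemma elog_of_pos {x : ℝ} (h : 0 < x) : elog x = ((Real.log x : ℝ) : EReal) := if_neg (not_le.2 h)

lemma term_base {θ w : ℝ} {n : ℕ} (h : w = 0 ∨ n = 0) : elog (fExt θ w n) = 0 := by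
  rw [fExt, if_pos h, elog_of_pos one_pos, Real.log_one]; rfl

lemma fExt_of_lt {θ w : ℝ} {n : ℕ} (hw : w ≠ 0) (hn : n ≠ 0) (hθn : θ < n) :
    fExt θ w n = w ^ (θ - 1) * (1 - w) ^ ((n:ℝ) - θ) / betaFun θ ((n:ℝ) - θ + 1) := by
  rw [fExt, if_neg (by simp [hw, hn]), if_pos hθn]

lemma fExt_of_ge {θ w : ℝ} {n : ℕ} (hw : w ≠ 0) (hn : n ≠ 0) (hθn : (n:ℝ) ≤ θ) :
    fExt θ w n = (n:ℝ) * w ^ ((n:ℝ) - 1) := by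
  rw [fExt, if_neg (by simp [hw, hn]), if_neg (not_lt.2 hθn)]

lemma term_bot {θ : ℝ} {n : ℕ} (hn : n ≠ 0) (hθ : 0 < θ) (hθn : θ < n) :
    elog (fExt θ 1 n) = ⊥ := by
  rw [fExt_of_lt one_ne_zero hn hθn]
  have h0 : (1:ℝ) - 1 = 0 := by ring
  rw [h0, Real.zero_rpow (by linarith : (n:ℝ) - θ ≠ 0)]
  simp [elog]

lemma term_eq_const {θ w : ℝ} {n : ℕ} (hn : n ≠ 0) (hθn : (n:ℝ) ≤ θ) (hw : 0 < w) :
    elog (fExt θ w n) = ((Real.log ((n:ℝ) * w ^ ((n:ℝ) - 1)) : ℝ) : EReal) := by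
  rw [fExt_of_ge hw.ne' hn hθn]
  have hpos : 0 < (n:ℝ) * w ^ ((n:ℝ) - 1) := by
    have h1 : 0 < (n:ℝ) := by exact_mod_cast Nat.pos_of_ne_zero hn
    have h2 : 0 < w ^ ((n:ℝ) - 1) := Real.rpow_pos_of_pos hw _
    positivity
  exact elog_of_pos hpos

/-- The real log-likelihood term in the Beta regime. -/
noncomputable def betaTerm (w : ℝ) (n : ℕ) (θ : ℝ) : ℝ :=
  (θ - 1) * Real.log w + ((n:ℝ) - θ) * Real.log (1 - w)
    - (Real.log (Real.Gamma θ) + Real.log (Real.Gamma ((n:ℝ) + 1 - θ)))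
    + Real.log (Real.Gamma ((n:ℝ) + 1))

lemma term_eq_beta {θ w : ℝ} {n : ℕ} (hθ : 0 < θ) (hθn : θ < n) (hw0 : 0 < w) (hw1 : w < 1) :
    elog (fExt θ w n) = ((betaTerm w n θ : ℝ) : EReal) := by
  have hn : n ≠ 0 := by
    intro h; rw [h] at hθn; simp at hθn; linarith
  have hb2 : (0:ℝ) < (n:ℝ) - θ + 1 := by linarith
  have hbpos := betaFun_pos hθ hb2
  have h1 : (0:ℝ) < w ^ (θ - 1) := Real.rpow_pos_of_pos hw0 _
  have h2 : (0:ℝ) < (1 - w) ^ ((n:ℝ) - θ) := Real.rpow_pos_of_pos (by linarith) _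
  rw [fExt_of_lt hw0.ne' hn hθn, elog_of_pos (by positivity)]
  congr 1
  rw [Real.log_div (by positivity) hbpos.ne', Real.log_mul h1.ne' h2.ne',
    Real.log_rpow hw0, Real.log_rpow (by linarith : (0:ℝ) < 1 - w)]
  rw [betaFun_eq_Gamma hθ hb2]
  have hsum : θ + ((n:ℝ) - θ + 1) = (n:ℝ) + 1 := by ring
  rw [hsum]
  have hg1 := Real.Gamma_pos_of_pos hθ
  have hg2 := Real.Gamma_pos_of_pos hb2
  have hg3 := Real.Gamma_pos_of_pos (by linarith : (0:ℝ) < (n:ℝ) + 1)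
  rw [Real.log_div (by positivity) hg3.ne', Real.log_mul hg1.ne' hg2.ne']
  have h4 : (n:ℝ) - θ + 1 = (n:ℝ) + 1 - θ := by ring
  rw [h4, betaTerm]
  ring

lemma betaTerm_junction {w : ℝ} (hw : 0 < w) {n : ℕ} (hn : n ≠ 0) :
    betaTerm w n (n:ℝ) = Real.log ((n:ℝ) * w ^ ((n:ℝ) - 1)) := by
  have hnpos : (0:ℝ) < n := by exact_mod_cast Nat.pos_of_ne_zero hn
  rw [betaTerm]
  have h1 : (n:ℝ) + 1 - (n:ℝ) = 1 := by ring
  rw [h1, Real.Gamma_one, Real.log_one]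
  have h2 : Real.Gamma ((n:ℝ) + 1) = (n:ℝ) * Real.Gamma (n:ℝ) := Real.Gamma_add_one hnpos.ne'
  rw [h2, Real.log_mul hnpos.ne' (Real.Gamma_pos_of_pos hnpos).ne',
    Real.log_mul hnpos.ne' (Real.rpow_pos_of_pos hw _).ne', Real.log_rpow hw]
  ring

lemma ecoe_sum {ι : Type*} (t : Finset ι) (f : ι → ℝ) :
    ((∑ i ∈ t, f i : ℝ) : EReal) = ∑ i ∈ t, ((f i : ℝ) : EReal) := by
  classical
  induction t using Finset.cons_induction with
  | empty => simp
  | cons a t' ha ih => rw [Finset.sum_cons, Finset.sum_cons, EReal.coe_add, ih]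

lemma logLik_eq_of_terms {M : ℕ} {v : Fin M → ℝ} {N : Fin M → ℕ} {θ : ℝ} {r : Fin M → ℝ}
    (h : ∀ j, elog (fExt θ (v j) (N j)) = ((r j : ℝ) : EReal)) :
    logLik M v N θ = ((((M:ℝ)⁻¹ * ∑ j, r j : ℝ)) : EReal) := by
  rw [logLik, Finset.sum_congr rfl (fun j _ => h j), ← ecoe_sum, ← EReal.coe_mul]

lemma logLik_le_of_terms {M : ℕ} {v : Fin M → ℝ} {N : Fin M → ℕ} {θ : ℝ} {r : Fin M → ℝ}
    (h : ∀ j, elog (fExt θ (v j) (N j)) ≤ ((r j : ℝ) : EReal)) :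
    logLik M v N θ ≤ ((((M:ℝ)⁻¹ * ∑ j, r j : ℝ)) : EReal) := by
  rw [logLik, EReal.coe_mul, ecoe_sum]
  exact mul_le_mul_of_nonneg_left (Finset.sum_le_sum fun j _ => h j)
    (by exact_mod_cast EReal.coe_nonneg.2 (by positivity))

lemma logLik_bot {M : ℕ} {v : Fin M → ℝ} {N : Fin M → ℕ} {θ : ℝ} (j : Fin M)
    (h1 : v j = 1) (hn : N j ≠ 0) (h2 : 0 < θ) (h3 : θ < (N j : ℝ)) (hM : M ≠ 0) :
    logLik M v N θ = ⊥ := by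
  have hterm : elog (fExt θ (v j) (N j)) = ⊥ := by rw [h1]; exact term_bot hn h2 h3
  have hsum : ∑ i : Fin M, elog (fExt θ (v i) (N i)) = ⊥ := by
    classical
    rw [← Finset.add_sum_erase _ _ (Finset.mem_univ j), hterm, EReal.bot_add]
  rw [logLik, hsum]
  exact EReal.coe_mul_bot_of_pos (by positivity)

lemma logGamma_contDiffOn : ContDiffOn ℝ (⊤ : ℕ∞) (fun x => Real.log (Real.Gamma x)) (Ioi (0:ℝ)) :=
  ContDiffOn.log (fun x hx => (contDiffAt_realGamma hx).contDiffWithinAt)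
    (fun x hx => (Real.Gamma_pos_of_pos hx).ne')

lemma betaTerm_continuousAt {w : ℝ} {n : ℕ} {θ₀ : ℝ} (h1 : 0 < θ₀) (h2 : θ₀ < (n:ℝ) + 1) :
    ContinuousAt (betaTerm w n) θ₀ := by
  have hg1 : ContinuousAt (fun θ : ℝ => Real.log (Real.Gamma θ)) θ₀ :=
    (Real.continuousAt_log (Real.Gamma_pos_of_pos h1).ne').comp
      (contDiffAt_realGamma h1).continuousAt
  have hinner : ContinuousAt (fun θ : ℝ => (n:ℝ) + 1 - θ) θ₀ :=
    (continuous_const.sub continuous_id).continuousAt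
  have hpos2 : 0 < (n:ℝ) + 1 - θ₀ := by linarith
  have hg2 : ContinuousAt (fun θ : ℝ => Real.log (Real.Gamma ((n:ℝ) + 1 - θ))) θ₀ := by
    have hGa : ContinuousAt Real.Gamma ((n:ℝ) + 1 - θ₀) := (contDiffAt_realGamma hpos2).continuousAt
    have hl : ContinuousAt Real.log (Real.Gamma ((n:ℝ) + 1 - θ₀)) :=
      Real.continuousAt_log (Real.Gamma_pos_of_pos hpos2).ne'
    exact (hl.comp hGa).comp hinner
  unfold betaTerm
  exact ((((continuousAt_id.sub continuousAt_const).mul continuousAt_const).add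
    ((continuousAt_const.sub continuousAt_id).mul continuousAt_const)).sub
    (hg1.add hg2)).add continuousAt_const

lemma betaTerm_contDiffOn {w : ℝ} {n : ℕ} {I : Set ℝ} (h1 : I ⊆ Ioi (0:ℝ))
    (h2 : I ⊆ Iio ((n:ℝ))) : ContDiffOn ℝ (⊤ : ℕ∞) (betaTerm w n) I := by
  have P1 : ContDiffOn ℝ (⊤ : ℕ∞) (fun θ : ℝ => (θ - 1) * Real.log w + ((n:ℝ) - θ) * Real.log (1 - w)) I :=
    ((contDiffOn_id.sub contDiffOn_const).mul contDiffOn_const).add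
      ((contDiffOn_const.sub contDiffOn_id).mul contDiffOn_const)
  have P2 : ContDiffOn ℝ (⊤ : ℕ∞) (fun θ : ℝ => Real.log (Real.Gamma θ)) I := logGamma_contDiffOn.mono h1
  have P3 : ContDiffOn ℝ (⊤ : ℕ∞) (fun θ : ℝ => Real.log (Real.Gamma ((n:ℝ) + 1 - θ))) I := by
    have hin : ContDiffOn ℝ (⊤ : ℕ∞) (fun θ : ℝ => (n:ℝ) + 1 - θ) I := contDiffOn_const.sub contDiffOn_id
    have hmaps : MapsTo (fun θ : ℝ => (n:ℝ) + 1 - θ) I (Ioi (0:ℝ)) := by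
      intro θ hθ
      have := h2 hθ
      simp only [mem_Iio] at this
      simp only [mem_Ioi]
      linarith
    exact logGamma_contDiffOn.comp hin hmaps
  exact (P1.sub (P2.add P3)).add contDiffOn_const

lemma betaTerm_strictConcaveOn {w : ℝ} {n : ℕ} {I : Set ℝ} (hIconv : Convex ℝ I)
    (h1 : I ⊆ Ioi (0:ℝ)) (h2 : I ⊆ Iio ((n:ℝ))) :
    StrictConcaveOn ℝ I (betaTerm w n) := by
  have hmaps : ∀ x ∈ I, (n:ℝ) + 1 - x ∈ Ioi (0:ℝ) := by
    intro x hx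
    have := h2 hx
    simp only [mem_Iio] at this
    simp only [mem_Ioi]
    linarith
  have hconv : StrictConvexOn ℝ I
      (fun θ => Real.log (Real.Gamma θ) + Real.log (Real.Gamma ((n:ℝ) + 1 - θ))) := by
    have ha := (strictConvexOn_logGamma.subset h1 hIconv)
    have hb := strictConvexOn_comp_const_sub hIconv strictConvexOn_logGamma ((n:ℝ)+1) hmaps
    exact ha.add hb
  have hneg : StrictConcaveOn ℝ I
      (-(fun θ => Real.log (Real.Gamma θ) + Real.log (Real.Gamma ((n:ℝ) + 1 - θ)))) := hconv.neg
  have haff : ConcaveOn ℝ I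
      (fun θ => (Real.log w - Real.log (1 - w)) * θ
        + (-Real.log w + (n:ℝ) * Real.log (1 - w) + Real.log (Real.Gamma ((n:ℝ) + 1)))) :=
    concaveOn_affine hIconv _ _
  have hsum := haff.add_strictConcaveOn hneg
  refine hsum.congr' fun θ hθ => ?_
  simp only [Pi.add_apply, Pi.neg_apply, betaTerm]
  ring

end Aux

theorem logLik_usc_and_piecewise (M : ℕ) (v : Fin M → ℝ) (N : Fin M → ℕ)
    (hv : ∀ j, v j ∈ Set.Icc (0:ℝ) 1) :
    UpperSemicontinuousOn (logLik M v N) (Set.Ioi (0:ℝ)) ∧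
    ∀ I : Set ℝ, Convex ℝ I → I ⊆ Set.Ioi (0:ℝ) → (∀ j, ((N j : ℝ)) ∉ I) →
      ((∃ c : EReal, ∀ θ ∈ I, logLik M v N θ = c) ∨
        (ContDiffOn ℝ (⊤ : ℕ∞) (fun θ => (logLik M v N θ).toReal) I ∧
          StrictConcaveOn ℝ I (fun θ => (logLik M v N θ).toReal) ∧
          ∀ θ ∈ I, logLik M v N θ = ((logLik M v N θ).toReal : EReal))) := by
  constructor
  · -- Upper semicontinuity
    intro θ₀ hθ₀
    by_cases hM : M = 0
    · intro y hy
      have hzero : ∀ θ : ℝ, logLik M v N θ = ((0:ℝ) : EReal) := by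
        intro θ; subst hM; simp [logLik]
      rw [hzero θ₀] at hy
      filter_upwards with θ
      rw [hzero θ]; exact hy
    by_cases hbot : ∃ j, v j = 1 ∧ N j ≠ 0 ∧ θ₀ < (N j : ℝ)
    · obtain ⟨j, h1, hn, hlt⟩ := hbot
      intro y hy
      rw [logLik_bot j h1 hn hθ₀ hlt hM] at hy
      have hev1 : ∀ᶠ θ in nhdsWithin θ₀ (Ioi 0), θ < (N j : ℝ) :=
        nhdsWithin_le_nhds (Iio_mem_nhds hlt)
      filter_upwards [hev1, self_mem_nhdsWithin] with θ hθlt hθpos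
      rw [logLik_bot j h1 hn hθpos hθlt hM]; exact hy
    push_neg at hbot
    have hub : ∀ j : Fin M, ∃ R : ℝ → ℝ, ContinuousWithinAt R (Ioi 0) θ₀ ∧
        (∀ᶠ θ in nhdsWithin θ₀ (Ioi 0), elog (fExt θ (v j) (N j)) ≤ ((R θ : ℝ) : EReal)) ∧
        elog (fExt θ₀ (v j) (N j)) = ((R θ₀ : ℝ) : EReal) := by
      intro j
      by_cases hb : v j = 0 ∨ N j = 0
      · refine ⟨fun _ => 0, continuousWithinAt_const,
          Filter.Eventually.of_forall fun θ => ?_, by rw [term_base hb]; simp⟩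
        rw [term_base hb]; simp
      push_neg at hb
      have hv0 : 0 < v j := lt_of_le_of_ne (hv j).1 (Ne.symm hb.1)
      have hn := hb.2
      by_cases hv1 : v j = 1
      · have hge : (N j : ℝ) ≤ θ₀ := hbot j hv1 hn
        refine ⟨fun _ => Real.log ((N j : ℝ) * (v j) ^ ((N j : ℝ) - 1)),
          continuousWithinAt_const, ?_, term_eq_const hn hge hv0⟩
        filter_upwards [self_mem_nhdsWithin] with θ hθpos
        rcases lt_or_ge θ ((N j : ℝ)) with hlt | hge'
        · rw [hv1, term_bot hn hθpos hlt]; exact bot_le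
        · rw [term_eq_const hn hge' hv0]
      have hvlt : v j < 1 := lt_of_le_of_ne (hv j).2 hv1
      have hnpos : (0:ℝ) < (N j : ℝ) := by exact_mod_cast Nat.pos_of_ne_zero hn
      rcases lt_trichotomy θ₀ ((N j : ℝ)) with hlt | heq | hgt
      · refine ⟨betaTerm (v j) (N j),
          (betaTerm_continuousAt hθ₀ (by linarith)).continuousWithinAt, ?_,
          term_eq_beta hθ₀ hlt hv0 hvlt⟩
        have hev1 : ∀ᶠ θ in nhdsWithin θ₀ (Ioi 0), θ < (N j : ℝ) :=
          nhdsWithin_le_nhds (Iio_mem_nhds hlt)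
        filter_upwards [hev1, self_mem_nhdsWithin] with θ hθ1 hθ2
        rw [term_eq_beta hθ2 hθ1 hv0 hvlt]
      · refine ⟨fun θ => max (betaTerm (v j) (N j) θ)
            (Real.log ((N j : ℝ) * (v j) ^ ((N j : ℝ) - 1))),
          ?_, ?_, ?_⟩
        · have h : ContinuousAt (fun θ => max (betaTerm (v j) (N j) θ)
              (Real.log ((N j : ℝ) * (v j) ^ ((N j : ℝ) - 1)))) θ₀ :=
            (betaTerm_continuousAt hθ₀ (by linarith)).max continuousAt_const
          exact h.continuousWithinAt
        · filter_upwards [self_mem_nhdsWithin] with θ hθpos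
          rcases lt_or_ge θ ((N j : ℝ)) with hlt' | hge'
          · rw [term_eq_beta hθpos hlt' hv0 hvlt]
            exact EReal.coe_le_coe_iff.2 (le_max_left _ _)
          · rw [term_eq_const hn hge' hv0]
            exact EReal.coe_le_coe_iff.2 (le_max_right _ _)
        · have h5 : max (betaTerm (v j) (N j) θ₀)
              (Real.log ((N j : ℝ) * (v j) ^ ((N j : ℝ) - 1)))
              = Real.log ((N j : ℝ) * (v j) ^ ((N j : ℝ) - 1)) := by
            rw [heq, betaTerm_junction hv0 hn, max_self]
          show elog (fExt θ₀ (v j) (N j)) = ((max (betaTerm (v j) (N j) θ₀)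
              (Real.log ((N j : ℝ) * (v j) ^ ((N j : ℝ) - 1))) : ℝ) : EReal)
          rw [h5, heq]
          exact term_eq_const hn le_rfl hv0
      · refine ⟨fun _ => Real.log ((N j : ℝ) * (v j) ^ ((N j : ℝ) - 1)),
          continuousWithinAt_const, ?_, term_eq_const hn hgt.le hv0⟩
        have hev1 : ∀ᶠ θ in nhdsWithin θ₀ (Ioi 0), (N j : ℝ) < θ :=
          nhdsWithin_le_nhds (Ioi_mem_nhds hgt)
        filter_upwards [hev1] with θ hθ1
        rw [term_eq_const hn hθ1.le hv0]
    choose R hRc hRub hReq using hub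
    intro y hy
    rw [logLik_eq_of_terms (fun j => hReq j)] at hy
    have hSc : ContinuousWithinAt (fun θ => (M:ℝ)⁻¹ * ∑ j, R j θ) (Ioi 0) θ₀ :=
      continuousWithinAt_const.mul (tendsto_finset_sum _ fun j _ => hRc j)
    have htends : Filter.Tendsto (fun θ => (((M:ℝ)⁻¹ * ∑ j, R j θ : ℝ) : EReal))
        (nhdsWithin θ₀ (Ioi 0)) (nhds (((M:ℝ)⁻¹ * ∑ j, R j θ₀ : ℝ) : EReal)) :=
      (continuous_coe_real_ereal.tendsto _).comp hSc
    have hev2 : ∀ᶠ θ in nhdsWithin θ₀ (Ioi 0),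
        (((M:ℝ)⁻¹ * ∑ j, R j θ : ℝ) : EReal) < y := htends (Iio_mem_nhds hy)
    have hev3 : ∀ᶠ θ in nhdsWithin θ₀ (Ioi 0),
        ∀ j, elog (fExt θ (v j) (N j)) ≤ ((R j θ : ℝ) : EReal) :=
      Filter.eventually_all.2 hRub
    filter_upwards [hev2, hev3] with θ h2 h3
    exact lt_of_le_of_lt (logLik_le_of_terms h3) h2
  · -- Piecewise structure
    intro I hIconv hIpos hIN
    rcases I.eq_empty_or_nonempty with hIe | hIne
    · left; exact ⟨0, fun θ hθ => absurd hθ (by rw [hIe]; exact notMem_empty θ)⟩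
    by_cases hM : M = 0
    · left
      refine ⟨((0:ℝ) : EReal), fun θ _ => ?_⟩
      subst hM; simp [logLik]
    by_cases hBot : ∃ j, v j = 1 ∧ I ⊆ Iio ((N j : ℝ)) ∧ N j ≠ 0
    · left
      obtain ⟨j, hj1, hjI, hjn⟩ := hBot
      exact ⟨⊥, fun θ hθ => logLik_bot j hj1 hjn (hIpos hθ) (hjI hθ) hM⟩
    have hgj : ∀ j : Fin M, ∃ g : ℝ → ℝ,
        (∀ θ ∈ I, elog (fExt θ (v j) (N j)) = ((g θ : ℝ) : EReal)) ∧
        ContDiffOn ℝ (⊤ : ℕ∞) g I ∧ ConcaveOn ℝ I g ∧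
        ((0 < v j ∧ v j < 1 ∧ I ⊆ Iio ((N j : ℝ)) ∧ N j ≠ 0) → StrictConcaveOn ℝ I g) ∧
        ((0 < v j ∧ v j < 1 ∧ I ⊆ Iio ((N j : ℝ)) ∧ N j ≠ 0) ∨ ∃ cst : ℝ, ∀ θ ∈ I, g θ = cst) := by
      intro j
      by_cases hb : v j = 0 ∨ N j = 0
      · refine ⟨fun _ => 0, fun θ _ => by rw [term_base hb]; simp, contDiffOn_const,
          concaveOn_const 0 hIconv, ?_, Or.inr ⟨0, fun _ _ => rfl⟩⟩
        rintro ⟨hv0, _, _, hn⟩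
        rcases hb with h | h
        · rw [h] at hv0; exact absurd hv0 (lt_irrefl 0)
        · exact absurd h hn
      push_neg at hb
      have hv0 : 0 < v j := lt_of_le_of_ne (hv j).1 (Ne.symm hb.1)
      have hn := hb.2
      rcases convex_avoid hIconv (hIN j) with hsub | hsub
      · by_cases hv1 : v j = 1
        · exact absurd ⟨j, hv1, hsub, hn⟩ hBot
        have hvlt : v j < 1 := lt_of_le_of_ne (hv j).2 hv1
        exact ⟨betaTerm (v j) (N j),
          fun θ hθ => term_eq_beta (hIpos hθ) (hsub hθ) hv0 hvlt,
          betaTerm_contDiffOn hIpos hsub,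
          (betaTerm_strictConcaveOn hIconv hIpos hsub).concaveOn,
          fun _ => betaTerm_strictConcaveOn hIconv hIpos hsub,
          Or.inl ⟨hv0, hvlt, hsub, hn⟩⟩
      · refine ⟨fun _ => Real.log ((N j : ℝ) * (v j) ^ ((N j : ℝ) - 1)),
          fun θ hθ => term_eq_const hn (le_of_lt (hsub hθ)) hv0, contDiffOn_const,
          concaveOn_const _ hIconv, ?_, Or.inr ⟨_, fun _ _ => rfl⟩⟩
        rintro ⟨_, _, hsub2, _⟩
        obtain ⟨θs, hθs⟩ := hIne
        have h1 := hsub hθs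
        have h2 := hsub2 hθs
        simp only [mem_Ioi] at h1
        simp only [mem_Iio] at h2
        linarith
    choose g hg1 hg2 hg3 hg4 hg5 using hgj
    have hLog : ∀ θ ∈ I, logLik M v N θ = ((((M:ℝ)⁻¹ * ∑ j, g j θ : ℝ)) : EReal) :=
      fun θ hθ => logLik_eq_of_terms (fun j => hg1 j θ hθ)
    by_cases hstrict : ∃ j, 0 < v j ∧ v j < 1 ∧ I ⊆ Iio ((N j : ℝ)) ∧ N j ≠ 0
    · right
      have htoReal : ∀ θ ∈ I, (logLik M v N θ).toReal = (M:ℝ)⁻¹ * ∑ j, g j θ := by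
        intro θ hθ
        rw [hLog θ hθ, EReal.toReal_coe]
      have hMpos : (0:ℝ) < (M:ℝ)⁻¹ := by positivity
      refine ⟨?_, ?_, ?_⟩
      · refine ContDiffOn.congr ?_ htoReal
        exact contDiffOn_const.mul (ContDiffOn.sum fun j _ => hg2 j)
      · obtain ⟨j0, hP⟩ := hstrict
        have hrest : ConcaveOn ℝ I (fun θ => ∑ j ∈ Finset.univ.erase j0, g j θ) :=
          concaveOn_finset_sum _ hIconv (fun i _ => hg3 i)
        have hstrictj0 : StrictConcaveOn ℝ I (g j0) := hg4 j0 hP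
        have hsumstrict : StrictConcaveOn ℝ I (fun θ => ∑ j, g j θ) := by
          have := hrest.add_strictConcaveOn hstrictj0
          refine this.congr' fun θ hθ => ?_
          show (∑ j ∈ Finset.univ.erase j0, g j θ) + g j0 θ = ∑ j, g j θ
          exact Finset.sum_erase_add _ _ (Finset.mem_univ j0)
        have := strictConcaveOn_const_mul hsumstrict hMpos
        exact this.congr' fun θ hθ => (htoReal θ hθ).symm
      · intro θ hθ
        rw [hLog θ hθ, EReal.toReal_coe]
    · left
      have hconst : ∀ j, ∃ cst : ℝ, ∀ θ ∈ I, g j θ = cst :=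
        fun j => (hg5 j).resolve_left (fun hP => hstrict ⟨j, hP⟩)
      choose cst hcst using hconst
      refine ⟨((((M:ℝ)⁻¹ * ∑ j, cst j : ℝ)) : EReal), fun θ hθ => ?_⟩
      rw [hLog θ hθ]
      norm_cast
      rw [Finset.sum_congr rfl (fun j _ => hcst j θ hθ)]
end

section
/- Let D = {(v_j, N_j)}_{j=1}^M ⊆ [0,1] × ℕ be a finite nonempty data set and let ℓ(θ; D) = (1/M) Σ_{j=1}^M log f_θ(v_j, N_j) with f_θ the extended Beta-density parametrization. Then ℓ(·; D) attains its (finite or −∞-valued) supremum on (0, ∞); i.e., a maximum-likelihood estimator θ⋆(D) = argmax_θ ℓ(θ; D) exists. -/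
/-! For `θ ≥ max N_j` every factor `f_θ(v_j, N_j)` is frozen, so `ℓ` is constant there.
On `(0, ∞)` each factor is continuous in `θ` once the Beta normalisation is written with `1 / Γ`,
except when `v_j = 1`, where it is `N_j` times the indicator of `[N_j, ∞)`; either way it is upper
semicontinuous, and so is `ℓ`, a sum of `[-∞, ∞)`-valued upper semicontinuous functions. As
`θ → 0` every non-trivial factor tends to `0` (because `1 / Γ(θ) → 0`), so near `0` the
likelihood lies below its value at `max N_j`, and the supremum is attained on a compact
interval `[ε, max N_j]`. -/

open MeasureTheory Real Set

open Filter Topology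

theorem Real.continuous_inv_Gamma : Continuous fun s : ℝ => (Gamma s)⁻¹ := by
  have h : (fun s : ℝ => (Gamma s)⁻¹) = fun s : ℝ => ((Complex.Gamma s)⁻¹).re := by
    ext s
    rw [Complex.Gamma_ofReal, ← Complex.ofReal_inv, Complex.ofReal_re]
  rw [h]
  exact Complex.continuous_re.comp
    (Complex.differentiable_one_div_Gamma.continuous.comp Complex.continuous_ofReal)

theorem betaFun_eq_beta {a b : ℝ} (ha : 0 < a) (hb : 0 < b) :
    betaFun a b = ProbabilityTheory.beta a b := by
  have hcoe : ((betaFun a b : ℝ) : ℂ) = Complex.betaIntegral a b := by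
    rw [betaFun, ← intervalIntegral.integral_ofReal, Complex.betaIntegral]
    refine intervalIntegral.integral_congr fun x hx => ?_
    rw [uIcc_of_le zero_le_one] at hx
    push_cast
    rw [Complex.ofReal_cpow hx.1, Complex.ofReal_cpow (sub_nonneg.mpr hx.2)]
    push_cast
    ring
  rw [ProbabilityTheory.beta_eq_betaIntegralReal a b ha hb, ← hcoe, Complex.ofReal_re]

/-- The Beta`(t, n - t + 1)` density at `v`, normalised through `1 / Γ`: this is continuous in
`t` on all of `ℝ` (away from `v ∈ {0, 1}`) and vanishes at `t = 0`. -/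
noncomputable def betaDensity (v : ℝ) (n : ℕ) (t : ℝ) : ℝ :=
  Gamma (n + 1) * (Gamma t)⁻¹ * (Gamma (n - t + 1))⁻¹ * v ^ (t - 1) * (1 - v) ^ ((n : ℝ) - t)

theorem elog_eq_log_ofReal (x : ℝ) : elog x = ENNReal.log (ENNReal.ofReal x) :=
  (ENNReal.log_ofReal x).symm

theorem elog_zero : elog 0 = ⊥ :=
  if_pos le_rfl

theorem continuous_elog : Continuous elog := by
  simp only [funext elog_eq_log_ofReal]
  exact ENNReal.continuous_log.comp ENNReal.continuous_ofReal

theorem monotone_elog : Monotone elog := by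
  simp only [funext elog_eq_log_ofReal]
  exact ENNReal.log_monotone.comp ENNReal.ofReal_mono

theorem elog_ne_top (x : ℝ) : elog x ≠ ⊤ := by
  unfold elog
  split_ifs <;> simp

theorem bot_lt_elog {x : ℝ} (hx : 0 < x) : ⊥ < elog x := by
  simp [elog, not_le.mpr hx]

section fExt

variable {v : ℝ} {n : ℕ}

theorem continuous_betaDensity_min (hv0 : v ≠ 0) (hv1 : v ≠ 1) :
    Continuous fun θ : ℝ => betaDensity v n (min θ n) := by
  have hpow₁ : Continuous fun t : ℝ => v ^ (t - 1) :=
    continuous_iff_continuousAt.mpr fun t =>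
      (continuousAt_const_rpow hv0).comp (continuousAt_id.sub continuousAt_const)
  have hpow₂ : Continuous fun t : ℝ => (1 - v) ^ ((n : ℝ) - t) :=
    continuous_iff_continuousAt.mpr fun t =>
      (continuousAt_const_rpow (sub_ne_zero.mpr hv1.symm)).comp
        (continuousAt_const.sub continuousAt_id)
  have hinv : Continuous fun t : ℝ => (Gamma (n - t + 1))⁻¹ :=
    continuous_inv_Gamma.comp (by fun_prop)
  exact ((((continuous_const.mul continuous_inv_Gamma).mul hinv).mul hpow₁).mul hpow₂).comp
    (by fun_prop)

theorem betaDensity_zero : betaDensity v n 0 = 0 := by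
  simp [betaDensity]

theorem fExt_eq_betaDensity (hv : v ≠ 0) (hn : n ≠ 0) {θ : ℝ} (hθ : 0 < θ) :
    fExt θ v n = betaDensity v n (min θ n) := by
  have hn₀ : (0 : ℝ) < n := Nat.cast_pos.mpr (Nat.pos_of_ne_zero hn)
  rw [fExt, if_neg (not_or.mpr ⟨hv, hn⟩), betaDensity]
  split_ifs with hθn
  · rw [min_eq_left hθn.le, betaFun_eq_beta hθ (by linarith), ProbabilityTheory.beta,
      show θ + ((n : ℝ) - θ + 1) = n + 1 by ring]
    have hΓ : Gamma ((n : ℝ) + 1) ≠ 0 := (Gamma_pos_of_pos (by linarith)).ne'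
    field_simp
  · rw [min_eq_right (not_lt.mp hθn), sub_self, rpow_zero, zero_add, Gamma_one,
      Gamma_add_one hn₀.ne']
    have hΓ : Gamma (n : ℝ) ≠ 0 := (Gamma_pos_of_pos hn₀).ne'
    field_simp

theorem fExt_one (hn : n ≠ 0) (θ : ℝ) :
    fExt θ 1 n = (Ici (n : ℝ)).indicator (fun _ => (n : ℝ)) θ := by
  rw [fExt, if_neg (not_or.mpr ⟨one_ne_zero, hn⟩), indicator_apply]
  simp only [mem_Ici]
  split_ifs with hθn hnθ hnθ
  · exact absurd hnθ (not_le.mpr hθn)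
  · rw [sub_self, zero_rpow (sub_ne_zero.mpr hθn.ne'), mul_zero, zero_div]
  · rw [one_rpow, mul_one]
  · exact absurd (not_lt.mp hθn) hnθ

theorem fExt_of_le_of_le {θ₁ θ₂ : ℝ} (h₁ : (n : ℝ) ≤ θ₁) (h₂ : (n : ℝ) ≤ θ₂) :
    fExt θ₁ v n = fExt θ₂ v n := by
  simp only [fExt, if_neg (not_lt.mpr h₁), if_neg (not_lt.mpr h₂)]

theorem fExt_pos_of_le (hv : 0 ≤ v) {θ : ℝ} (hθ : (n : ℝ) ≤ θ) : 0 < fExt θ v n := by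
  rw [fExt, if_neg (not_lt.mpr hθ)]
  split_ifs with h
  · exact one_pos
  · rw [not_or] at h
    exact mul_pos (Nat.cast_pos.mpr (Nat.pos_of_ne_zero h.2)) (rpow_pos_of_pos (hv.lt_of_ne' h.1) _)

theorem upperSemicontinuousOn_fExt (hv : v ∈ Icc (0 : ℝ) 1) :
    UpperSemicontinuousOn (fun θ => fExt θ v n) (Ioi 0) := by
  by_cases htriv : v = 0 ∨ n = 0
  · simp only [fExt, if_pos htriv]
    exact continuousOn_const.upperSemicontinuousOn
  obtain ⟨hv0, hn⟩ := not_or.mp htriv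
  by_cases hv1 : v = 1
  · subst hv1
    simp only [fExt_one hn]
    exact (isClosed_Ici.upperSemicontinuous_indicator (Nat.cast_nonneg n)).upperSemicontinuousOn _
  · exact ((continuous_betaDensity_min hv0 hv1).continuousOn.congr fun θ hθ =>
      fExt_eq_betaDensity hv0 hn hθ).upperSemicontinuousOn

theorem tendsto_fExt_nhdsGT_zero (hv : v ≠ 0) (hn : n ≠ 0) :
    Tendsto (fun θ => fExt θ v n) (𝓝[>] 0) (𝓝 0) := by
  have hn₀ : (0 : ℝ) < n := Nat.cast_pos.mpr (Nat.pos_of_ne_zero hn)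
  by_cases hv1 : v = 1
  · subst hv1
    refine tendsto_const_nhds.congr' ?_
    filter_upwards [nhdsWithin_le_nhds (Iio_mem_nhds hn₀)] with θ hθ
    rw [fExt_one hn, indicator_of_notMem (notMem_Ici.mpr hθ)]
  · have hlim := ((continuous_betaDensity_min (n := n) hv hv1).tendsto (0 : ℝ)).mono_left
      (nhdsWithin_le_nhds (s := Ioi 0))
    rw [min_eq_left hn₀.le, betaDensity_zero] at hlim
    refine hlim.congr' ?_
    filter_upwards [self_mem_nhdsWithin] with θ hθ
    exact (fExt_eq_betaDensity hv hn hθ).symm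

theorem upperSemicontinuousOn_elog_fExt (hv : v ∈ Icc (0 : ℝ) 1) :
    UpperSemicontinuousOn (fun θ => elog (fExt θ v n)) (Ioi 0) :=
  continuous_elog.comp_upperSemicontinuousOn (upperSemicontinuousOn_fExt hv) monotone_elog

theorem eventually_elog_fExt_le (hv : 0 ≤ v) {K : ℝ} (hK : (n : ℝ) ≤ K) :
    ∀ᶠ θ in 𝓝[>] 0, elog (fExt θ v n) ≤ elog (fExt K v n) := by
  by_cases htriv : v = 0 ∨ n = 0
  · simp [fExt, if_pos htriv]
  obtain ⟨hv0, hn⟩ := not_or.mp htriv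
  have hbot : Tendsto (fun θ => elog (fExt θ v n)) (𝓝[>] 0) (𝓝 ⊥) := by
    have h := (continuous_elog.tendsto 0).comp (tendsto_fExt_nhdsGT_zero hv0 hn)
    rwa [elog_zero] at h
  exact (hbot.eventually (Iio_mem_nhds (bot_lt_elog (fExt_pos_of_le hv hK)))).mono
    fun _ => le_of_lt

end fExt

theorem EReal.sum_ne_top {ι : Type*} {f : ι → EReal} {s : Finset ι} (hf : ∀ i ∈ s, f i ≠ ⊤) :
    ∑ i ∈ s, f i ≠ ⊤ :=
  Finset.sum_induction f (· ≠ ⊤) (fun _ _ => EReal.add_ne_top) EReal.zero_ne_top hf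

theorem EReal.upperSemicontinuousOn_sum {ι α : Type*} [TopologicalSpace α] {f : ι → α → EReal}
    {s : Finset ι} {t : Set α} (hf : ∀ i ∈ s, UpperSemicontinuousOn (f i) t)
    (hf_top : ∀ i ∈ s, ∀ x ∈ t, f i x ≠ ⊤) :
    UpperSemicontinuousOn (fun x => ∑ i ∈ s, f i x) t := by
  classical
  induction s using Finset.induction_on with
  | empty => simpa using upperSemicontinuousOn_const
  | insert i s hi ih =>
    simp only [Finset.sum_insert hi]
    refine (hf i (s.mem_insert_self i)).add' (ih (fun j hj => hf j (Finset.mem_insert_of_mem hj))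
      (fun j hj => hf_top j (Finset.mem_insert_of_mem hj))) fun x hx => ?_
    refine EReal.continuousAt_add (.inl (hf_top i (s.mem_insert_self i) x hx)) (.inr ?_)
    exact EReal.sum_ne_top fun j hj => hf_top j (Finset.mem_insert_of_mem hj) x hx

theorem exists_isMaxOn_Ioi_of_upperSemicontinuousOn {β : Type*} [LinearOrder β] {f : ℝ → β}
    {K : ℝ} (hK : 0 < K) (hf : UpperSemicontinuousOn f (Ioi 0))
    (h_zero : ∀ᶠ θ in 𝓝[>] 0, f θ ≤ f K) (h_top : ∀ θ, K ≤ θ → f θ ≤ f K) :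
    ∃ θ ∈ Ioi 0, IsMaxOn f (Ioi 0) θ := by
  obtain ⟨u, hu, hfu⟩ := mem_nhdsGT_iff_exists_Ioo_subset.mp h_zero
  set ε := min (u / 2) K
  have hε : 0 < ε := lt_min (half_pos hu) hK
  have hεu : ε < u := (min_le_left _ _).trans_lt (half_lt_self hu)
  obtain ⟨θ, hθ, hmax⟩ := (hf.mono fun x hx => hε.trans_le hx.1).exists_isMaxOn
    (nonempty_Icc.mpr (min_le_right _ _)) isCompact_Icc
  have hKθ : f K ≤ f θ := hmax ⟨min_le_right _ _, le_rfl⟩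
  refine ⟨θ, hε.trans_le hθ.1, fun θ' (hθ' : 0 < θ') => ?_⟩
  rcases lt_or_ge θ' ε with hθ'ε | hεθ'
  · exact (hfu ⟨hθ', hθ'ε.trans hεu⟩).trans hKθ
  · rcases le_or_gt θ' K with hθ'K | hKθ'
    · exact hmax ⟨hεθ', hθ'K⟩
    · exact (h_top θ' hKθ'.le).trans hKθ

theorem logLik_exists_max_general (M : ℕ) (v : Fin M → ℝ) (N : Fin M → ℕ)
    (hv : ∀ j, v j ∈ Set.Icc (0:ℝ) 1) :
    ∃ θ ∈ Set.Ioi (0:ℝ), ∀ θ' ∈ Set.Ioi (0:ℝ), logLik M v N θ' ≤ logLik M v N θ := by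
  set S : ℝ → EReal := fun θ => ∑ j, elog (fExt θ (v j) (N j))
  set K : ℝ := (Finset.univ.sup N : ℕ) + 1
  have hNK : ∀ j, (N j : ℝ) ≤ K := fun j =>
    (Nat.cast_le.mpr (Finset.le_sup (Finset.mem_univ j))).trans (le_add_of_nonneg_right zero_le_one)
  have hS : UpperSemicontinuousOn S (Ioi 0) :=
    EReal.upperSemicontinuousOn_sum (fun j _ => upperSemicontinuousOn_elog_fExt (hv j))
      fun j _ _ _ => elog_ne_top _
  have hS_zero : ∀ᶠ θ in 𝓝[>] 0, S θ ≤ S K := by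
    filter_upwards [eventually_all.mpr fun j => eventually_elog_fExt_le (hv j).1 (hNK j)]
      with θ hθ using Finset.sum_le_sum fun j _ => hθ j
  have hS_top : ∀ θ, K ≤ θ → S θ ≤ S K := fun θ hθ => le_of_eq <|
    Finset.sum_congr rfl fun j _ => by rw [fExt_of_le_of_le ((hNK j).trans hθ) (hNK j)]
  obtain ⟨θ, hθ, hmax⟩ :=
    exists_isMaxOn_Ioi_of_upperSemicontinuousOn (by positivity) hS hS_zero hS_top
  have hM : (0 : EReal) ≤ ((M : ℝ)⁻¹ : ℝ) := EReal.coe_nonneg.mpr (by positivity)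
  exact ⟨θ, hθ, fun θ' hθ' => mul_le_mul_of_nonneg_left (hmax hθ') hM⟩

/-- Existence of a maximum-likelihood estimator `θ⋆(D)`. -/
theorem logLik_exists_max (M : ℕ) (hM : 1 ≤ M) (v : Fin M → ℝ) (N : Fin M → ℕ)
    (hv : ∀ j, v j ∈ Set.Icc (0:ℝ) 1) :
    ∃ θ ∈ Set.Ioi (0:ℝ), ∀ θ' ∈ Set.Ioi (0:ℝ), logLik M v N θ' ≤ logLik M v N θ :=
  logLik_exists_max_general M v N hv
end
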